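/- arXiv:2605.29500 — 2 statements merged into one kernel-verified Lean document; each statement's English description precedes it below -/
import Mathlib

section
/- Let Ω be a finite set, P_π ≪ P_β pmfs, q : Ω → Z, g : Z → ℝ. For each z with F_β(z)>0 define conditional pmfs P_μ(·|z)(ω) = P_μ(ω)·1{q(ω)=z}/F_μ(z) (when F_μ(z)>0). Then the variance gap Var_β(ρG) − Var_β(w(q)g(q)) equals Σ_{z : F_β(z)>0} F_β(z) g(z)² w(z)² χ²(P_π(·|z) ∥ P_β(·|z)), where χ²(P∥Q) = Σ_ω Q(ω)(P(ω)/Q(ω) − 1)² and w(z)=F_π(z)/F_β(z). (Classes z with F_π(z)=0 contribute zero since w(z)=0.) -/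
/-!
Under `P_β`, the function `w(q) g(q)` is the conditional expectation of `ρ G` given `q`: both
integrate every `c(q)` to `Σ_z F_π(z) c(z)`. Hence `ρG − w(q)g(q)` is orthogonal to `1` and to
`w(q)g(q)`, and Pythagoras turns the variance gap into `E_β[g(q)² (ρ − w(q))²]`. On a fiber
`{q = z}` with `F_π(z) > 0`, the ratio of the conditional pmfs is `ρ / w(z)`, so the fiber's
contribution is `F_β(z) g(z)² w(z)² χ²(P_π(·|z) ∥ P_β(·|z))`; when `F_π(z) = 0` both sides vanish.
-/

open Finset

section

variable {Ω Z : Type*} [Fintype Ω]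

theorem sum_mul_sub_sq_sub_sum_mul_sub_sq (p f h : Ω → ℝ)
    (hmean : ∑ ω, p ω * f ω = ∑ ω, p ω * h ω)
    (hcross : ∑ ω, p ω * (f ω * h ω) = ∑ ω, p ω * (h ω * h ω)) :
    ∑ ω, p ω * (f ω - ∑ ω', p ω' * f ω') ^ 2 - ∑ ω, p ω * (h ω - ∑ ω', p ω' * h ω') ^ 2 =
      ∑ ω, p ω * (f ω - h ω) ^ 2 := by
  rw [hmean]
  set m := ∑ ω', p ω' * h ω'
  have hpoint : ∀ ω, p ω * (f ω - m) ^ 2 - p ω * (h ω - m) ^ 2 =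
      p ω * (f ω - h ω) ^ 2 + 2 * (p ω * (f ω * h ω) - p ω * (h ω * h ω))
        - 2 * m * (p ω * f ω - p ω * h ω) := fun ω => by ring
  rw [← sum_sub_distrib]
  simp only [hpoint, sum_add_distrib, sum_sub_distrib, ← mul_sum, hcross, hmean]
  ring

theorem mul_ite_div_of_imp {G₀ : Type*} [CommGroupWithZero G₀] {a b : G₀} [Decidable (b = 0)]
    (h : b = 0 → a = 0) :
    b * (if b = 0 then 0 else a / b) = a := by
  rw [ite_eq_right_iff.mpr fun hb => by rw [hb, div_zero]]
  exact mul_div_cancel_of_imp' h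

noncomputable def chiSq (P Q : Ω → ℝ) : ℝ :=
  ∑ ω ∈ univ.filter (fun ω => Q ω ≠ 0), Q ω * (P ω / Q ω - 1) ^ 2

theorem chiSq_eq_sum (P Q : Ω → ℝ) : chiSq P Q = ∑ ω, Q ω * (P ω / Q ω - 1) ^ 2 :=
  sum_filter_of_ne fun _ _ hne => left_ne_zero_of_mul hne

variable [DecidableEq Z] (q : Ω → Z)

def fiberMass (P : Ω → ℝ) (z : Z) : ℝ :=
  ∑ ω ∈ univ.filter (fun ω => q ω = z), P ω

variable {q}

theorem fiberMass_nonneg {P : Ω → ℝ} (hP : ∀ ω, 0 ≤ P ω) (z : Z) : 0 ≤ fiberMass q P z :=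
  sum_nonneg fun ω _ => hP ω

theorem eq_zero_of_fiberMass_eq_zero {P : Ω → ℝ} (hP : ∀ ω, 0 ≤ P ω) {z : Z}
    (hz : fiberMass q P z = 0) {ω : Ω} (hω : q ω = z) : P ω = 0 :=
  (sum_eq_zero_iff_of_nonneg fun ω _ => hP ω).mp hz ω (by simpa using hω)

theorem fiberMass_eq_zero_of_absCont {Pπ Pβ : Ω → ℝ} (hβ0 : ∀ ω, 0 ≤ Pβ ω)
    (hac : ∀ ω, Pβ ω = 0 → Pπ ω = 0) {z : Z} (hz : fiberMass q Pβ z = 0) :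
    fiberMass q Pπ z = 0 :=
  sum_eq_zero fun _ hω => hac _ (eq_zero_of_fiberMass_eq_zero hβ0 hz (mem_filter.mp hω).2)

theorem sum_fiber_mul_sub_sq_eq_mul_chiSq {Pπ Pβ ρ : Ω → ℝ} (hπ0 : ∀ ω, 0 ≤ Pπ ω)
    (hρ : ∀ ω, Pβ ω * ρ ω = Pπ ω) {z : Z} {w : ℝ} (hβz : fiberMass q Pβ z ≠ 0)
    (hw : fiberMass q Pβ z * w = fiberMass q Pπ z) {Pπc Pβc : Ω → ℝ}
    (hPπc : 0 < fiberMass q Pπ z →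
      ∀ ω, Pπc ω = (if q ω = z then Pπ ω else 0) / fiberMass q Pπ z)
    (hPβc : ∀ ω, Pβc ω = (if q ω = z then Pβ ω else 0) / fiberMass q Pβ z) :
    ∑ ω ∈ univ.filter (fun ω => q ω = z), Pβ ω * (ρ ω - w) ^ 2 =
      fiberMass q Pβ z * w ^ 2 * chiSq Pπc Pβc := by
  rcases (fiberMass_nonneg hπ0 z).eq_or_lt with hπz | hπz
  · have hw0 : w = 0 := (mul_eq_zero.mp (hw.trans hπz.symm)).resolve_left hβz
    rw [hw0, sum_eq_zero]
    · ring
    intro ω hω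
    rw [sub_zero, sq, ← mul_assoc, hρ,
      eq_zero_of_fiberMass_eq_zero hπ0 hπz.symm (mem_filter.mp hω).2, zero_mul]
  · have hwne : w ≠ 0 := by
      rintro rfl
      exact hπz.ne (by rw [← hw, mul_zero])
    rw [chiSq_eq_sum, mul_sum, sum_filter]
    refine sum_congr rfl fun ω _ => ?_
    rw [hPβc, hPπc hπz]
    split_ifs with hq
    · by_cases hβω : Pβ ω = 0
      · simp [hβω]
      · rw [← hρ, ← hw]
        field_simp
    · simp

variable [Fintype Z]

theorem sum_filter_fiberMass_pos {P : Ω → ℝ} (hP : ∀ ω, 0 ≤ P ω) (F : Z → Ω → ℝ) :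
    ∑ z ∈ univ.filter (fun z => 0 < fiberMass q P z),
        ∑ ω ∈ univ.filter (fun ω => q ω = z), P ω * F z ω =
      ∑ z, ∑ ω ∈ univ.filter (fun ω => q ω = z), P ω * F z ω := by
  refine sum_filter_of_ne fun z _ hne => ?_
  refine (fiberMass_nonneg hP z).lt_of_ne fun hz => hne (sum_eq_zero fun ω hω => ?_)
  rw [eq_zero_of_fiberMass_eq_zero hP hz.symm (mem_filter.mp hω).2, zero_mul]

theorem sum_eq_sum_sum_fiber (F : Z → Ω → ℝ) :
    ∑ ω, F (q ω) ω = ∑ z, ∑ ω ∈ univ.filter (fun ω => q ω = z), F z ω := by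
  rw [← sum_fiberwise univ q]
  exact sum_congr rfl fun z _ => sum_congr rfl fun ω hω => by rw [(mem_filter.mp hω).2]

theorem sum_mul_comp_eq_sum_fiberMass_mul (P : Ω → ℝ) (c : Z → ℝ) :
    ∑ ω, P ω * c (q ω) = ∑ z, fiberMass q P z * c z := by
  simp only [sum_eq_sum_sum_fiber (fun z ω => P ω * c z), fiberMass, sum_mul]

theorem sum_mul_density_mul_comp {Pπ Pβ ρ : Ω → ℝ} {w : Z → ℝ}
    (hρ : ∀ ω, Pβ ω * ρ ω = Pπ ω) (hw : ∀ z, fiberMass q Pβ z * w z = fiberMass q Pπ z)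
    (c : Z → ℝ) :
    ∑ ω, Pβ ω * (ρ ω * c (q ω)) = ∑ ω, Pβ ω * (w (q ω) * c (q ω)) := by
  calc ∑ ω, Pβ ω * (ρ ω * c (q ω)) = ∑ ω, Pπ ω * c (q ω) := by simp only [← mul_assoc, hρ]
    _ = ∑ z, fiberMass q Pβ z * (w z * c z) := by
        rw [sum_mul_comp_eq_sum_fiberMass_mul]
        simp only [← hw, mul_assoc]
    _ = ∑ ω, Pβ ω * (w (q ω) * c (q ω)) :=
        (sum_mul_comp_eq_sum_fiberMass_mul Pβ fun z => w z * c z).symm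

end

theorem stmt_4_general {Ω Z : Type*} [Fintype Ω] [Fintype Z] [DecidableEq Z]
    (Pπ Pβ : Ω → ℝ)
    (hπ0 : ∀ ω, 0 ≤ Pπ ω) (hβ0 : ∀ ω, 0 ≤ Pβ ω)
    (hac : ∀ ω, Pβ ω = 0 → Pπ ω = 0)
    (q : Ω → Z) (g : Z → ℝ)
    (Fπ Fβ : Z → ℝ)
    (hFπ : ∀ z, Fπ z = ∑ ω ∈ univ.filter (fun ω => q ω = z), Pπ ω)
    (hFβ : ∀ z, Fβ z = ∑ ω ∈ univ.filter (fun ω => q ω = z), Pβ ω)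
    (ρ : Ω → ℝ)
    (hρ : ∀ ω, ρ ω = if Pβ ω = 0 then 0 else Pπ ω / Pβ ω)
    (w : Z → ℝ)
    (hw : ∀ z, w z = if Fβ z = 0 then 0 else Fπ z / Fβ z)
    -- expectation and variance under `Pβ`
    (E : (Ω → ℝ) → ℝ) (hE : ∀ f, E f = ∑ ω, Pβ ω * f ω)
    (V : (Ω → ℝ) → ℝ) (hV : ∀ f, V f = E (fun ω => (f ω - E f) ^ 2))
    -- conditional pmfs given {q = z}
    (Pπc Pβc : Z → Ω → ℝ)
    (hPπc : ∀ z ω, 0 < Fπ z →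
      Pπc z ω = (if q ω = z then Pπ ω else 0) / Fπ z)
    (hPβc : ∀ z ω, 0 < Fβ z →
      Pβc z ω = (if q ω = z then Pβ ω else 0) / Fβ z)
    -- chi-square divergence between pmfs, terms with zero denominator vanish
    (chi2 : (Ω → ℝ) → (Ω → ℝ) → ℝ)
    (hchi2 : ∀ P Q, chi2 P Q =
      ∑ ω ∈ univ.filter (fun ω => Q ω ≠ 0), Q ω * (P ω / Q ω - 1) ^ 2) :
    V (fun ω => ρ ω * g (q ω)) - V (fun ω => w (q ω) * g (q ω)) =
      ∑ z ∈ univ.filter (fun z => 0 < Fβ z),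
        Fβ z * g z ^ 2 * w z ^ 2 * chi2 (Pπc z) (Pβc z) := by
  obtain rfl : Fπ = fiberMass q Pπ := funext hFπ
  obtain rfl : Fβ = fiberMass q Pβ := funext hFβ
  obtain rfl : chi2 = chiSq := funext₂ hchi2
  obtain rfl : E = fun f => ∑ ω, Pβ ω * f ω := funext hE
  obtain rfl : V = fun f => ∑ ω, Pβ ω * (f ω - ∑ ω', Pβ ω' * f ω') ^ 2 := funext hV
  have hρ' : ∀ ω, Pβ ω * ρ ω = Pπ ω := fun ω => by rw [hρ, mul_ite_div_of_imp (hac ω)]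
  have hw' : ∀ z, fiberMass q Pβ z * w z = fiberMass q Pπ z := fun z => by
    rw [hw, mul_ite_div_of_imp (fiberMass_eq_zero_of_absCont hβ0 hac)]
  have hcond := sum_mul_density_mul_comp hρ' hw'
  calc _ = ∑ ω, Pβ ω * (ρ ω * g (q ω) - w (q ω) * g (q ω)) ^ 2 :=
        sum_mul_sub_sq_sub_sum_mul_sub_sq Pβ _ _ (hcond g)
          (by simpa only [mul_assoc] using hcond fun z => g z * (w z * g z))
    _ = ∑ z, ∑ ω ∈ univ.filter (fun ω => q ω = z), Pβ ω * ((ρ ω - w z) ^ 2 * g z ^ 2) :=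
        (sum_congr rfl fun _ _ => by ring).trans (sum_eq_sum_sum_fiber _)
    _ = ∑ z ∈ univ.filter (fun z => 0 < fiberMass q Pβ z),
          ∑ ω ∈ univ.filter (fun ω => q ω = z), Pβ ω * ((ρ ω - w z) ^ 2 * g z ^ 2) :=
        (sum_filter_fiberMass_pos hβ0 _).symm
    _ = _ := sum_congr rfl fun z hz => by
        have hβz := (mem_filter.mp hz).2
        rw [← sum_congr rfl fun ω _ => mul_assoc .., ← sum_mul,
          sum_fiber_mul_sub_sq_eq_mul_chiSq hπ0 hρ' hβz.ne' (hw' z) (fun h ω => hPπc z ω h)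
            fun ω => hPβc z ω hβz]
        ring

/-- chi-square form of the variance gap:
`Var_β(ρG) − Var_β(w(q)g(q)) = Σ_{z : F_β(z)>0} F_β(z) g(z)² w(z)² χ²(P_π(·|z) ∥ P_β(·|z))`. -/
theorem stmt_4 {Ω Z : Type*} [Fintype Ω] [Fintype Z] [DecidableEq Z]
    (Pπ Pβ : Ω → ℝ)
    (hπ0 : ∀ ω, 0 ≤ Pπ ω) (hβ0 : ∀ ω, 0 ≤ Pβ ω)
    (hπ1 : ∑ ω, Pπ ω = 1) (hβ1 : ∑ ω, Pβ ω = 1)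
    (hac : ∀ ω, Pβ ω = 0 → Pπ ω = 0)
    (q : Ω → Z) (g : Z → ℝ)
    (Fπ Fβ : Z → ℝ)
    (hFπ : ∀ z, Fπ z = ∑ ω ∈ univ.filter (fun ω => q ω = z), Pπ ω)
    (hFβ : ∀ z, Fβ z = ∑ ω ∈ univ.filter (fun ω => q ω = z), Pβ ω)
    (ρ : Ω → ℝ)
    (hρ : ∀ ω, ρ ω = if Pβ ω = 0 then 0 else Pπ ω / Pβ ω)
    (w : Z → ℝ)
    (hw : ∀ z, w z = if Fβ z = 0 then 0 else Fπ z / Fβ z)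
    -- expectation and variance under `Pβ`
    (E : (Ω → ℝ) → ℝ) (hE : ∀ f, E f = ∑ ω, Pβ ω * f ω)
    (V : (Ω → ℝ) → ℝ) (hV : ∀ f, V f = E (fun ω => (f ω - E f) ^ 2))
    -- conditional pmfs given {q = z}
    (Pπc Pβc : Z → Ω → ℝ)
    (hPπc : ∀ z ω, 0 < Fπ z →
      Pπc z ω = (if q ω = z then Pπ ω else 0) / Fπ z)
    (hPβc : ∀ z ω, 0 < Fβ z →
      Pβc z ω = (if q ω = z then Pβ ω else 0) / Fβ z)
    -- chi-square divergence between pmfs, terms with zero denominator vanish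
    (chi2 : (Ω → ℝ) → (Ω → ℝ) → ℝ)
    (hchi2 : ∀ P Q, chi2 P Q =
      ∑ ω ∈ univ.filter (fun ω => Q ω ≠ 0), Q ω * (P ω / Q ω - 1) ^ 2) :
    V (fun ω => ρ ω * g (q ω)) - V (fun ω => w (q ω) * g (q ω)) =
      ∑ z ∈ univ.filter (fun z => 0 < Fβ z),
        Fβ z * g z ^ 2 * w z ^ 2 * chi2 (Pπc z) (Pβc z) :=
  stmt_4_general Pπ Pβ hπ0 hβ0 hac q g Fπ Fβ hFπ hFβ ρ hρ w hw E hE V hV Pπc Pβc hPπc hPβc chi2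
    hchi2
end

section
/- Per-term Rao–Blackwell for forward-flow IS: With the sufficient-quotient setup (histories ω, quotient z, actions a drawn from β(·|z), bounded reward r(z,a)), define X = ρ_hist(ω)·ρ_act(z,a)·r(z,a) where ρ_hist = P_π/P_β, and Y = (F_π(z)/F_β(z))·ρ_act(z,a)·r(z,a). Then Y = E_β[X | z, a] (using that the conditional law of ω given z is unchanged by further conditioning on a, since a depends on ω only through z), and hence Var_β(Y) ≤ Var_β(X) with E_β(Y)=E_β(X). -/
open Finset

/-!
On a finite space with nonnegative weights, the fibre average `Ȳ` of `X` over a map `f`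
satisfies `∑ P (g ∘ f) (X - Ȳ) = 0` for every `g`: the residual `X - Ȳ` is orthogonal to
everything measurable in `f`. Taking `g = 1` gives equal means, and taking `g = Ȳ - 𝔼X`
kills the cross term in `(X - 𝔼X)² = (Ȳ - 𝔼X)² + (X - Ȳ)² + 2 (Ȳ - 𝔼X)(X - Ȳ)`, so
`Var X = Var Ȳ + 𝔼 (X - Ȳ)² ≥ Var Ȳ`.

For the forward-flow estimator the joint weight is `P_β(ω) β(a | z(ω))`, so on the fibre
`{z(ω) = z, a}` the action factor `β(a | z)` is constant and cancels: conditioning on `(z, a)`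
is conditioning on `z`, and `E_β[ρ_hist | z] = F_π(z) / F_β(z)`.
-/

noncomputable section WeightedFiniteSpace

variable {α κ : Type*} [Fintype α] [DecidableEq κ]

def weightedMean (P X : α → ℝ) : ℝ := ∑ p, P p * X p

def weightedVariance (P X : α → ℝ) : ℝ :=
  weightedMean P fun p => (X p - weightedMean P X) ^ 2

/-- `𝔼[X | f = k]`, read as `0 / 0 = 0` on fibres of zero mass. -/
def fiberMean (P X : α → ℝ) (f : α → κ) (k : κ) : ℝ :=
  (∑ q ∈ univ.filter (fun q => f q = k), P q * X q)
    / ∑ q ∈ univ.filter (fun q => f q = k), P q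

variable {P X : α → ℝ}

lemma weightedMean_congr_of_pos (hP : ∀ p, 0 ≤ P p) {Y Y' : α → ℝ}
    (h : ∀ p, 0 < P p → Y p = Y' p) : weightedMean P Y = weightedMean P Y' := by
  refine sum_congr rfl fun p _ => ?_
  rcases (hP p).eq_or_lt with hp | hp
  · rw [← hp, zero_mul, zero_mul]
  · rw [h p hp]

lemma sum_fiber_mul_fiberMean (hP : ∀ p, 0 ≤ P p) (f : α → κ) (k : κ) :
    (∑ q ∈ univ.filter (fun q => f q = k), P q) * fiberMean P X f k
      = ∑ q ∈ univ.filter (fun q => f q = k), P q * X q := by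
  by_cases hmass : ∑ q ∈ univ.filter (fun q => f q = k), P q = 0
  · have hzero := (sum_eq_zero_iff_of_nonneg fun q _ => hP q).mp hmass
    rw [hmass, zero_mul, eq_comm]
    exact sum_eq_zero fun q hq => by rw [hzero q hq, zero_mul]
  · exact mul_div_cancel₀ _ hmass

lemma sum_mul_comp_mul_sub_fiberMean (hP : ∀ p, 0 ≤ P p) (f : α → κ) (g : κ → ℝ) :
    ∑ p, P p * (g (f p) * (X p - fiberMean P X f (f p))) = 0 := by
  rw [← sum_fiberwise_of_maps_to (t := univ.image f) fun p _ => mem_image_of_mem f (mem_univ p)]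
  refine sum_eq_zero fun k _ => ?_
  calc ∑ p ∈ univ.filter (fun p => f p = k), P p * (g (f p) * (X p - fiberMean P X f (f p)))
      = g k * (∑ p ∈ univ.filter (fun p => f p = k), P p * X p
          - (∑ p ∈ univ.filter (fun p => f p = k), P p) * fiberMean P X f k) := by
        rw [sum_mul, ← sum_sub_distrib, mul_sum]
        refine sum_congr rfl fun p hp => ?_
        rw [(mem_filter.mp hp).2]
        ring
    _ = 0 := by rw [sum_fiber_mul_fiberMean hP, sub_self, mul_zero]

lemma weightedMean_fiberMean (hP : ∀ p, 0 ≤ P p) (f : α → κ) :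
    weightedMean P (fun p => fiberMean P X f (f p)) = weightedMean P X := by
  have horth := sum_mul_comp_mul_sub_fiberMean (X := X) hP f fun _ => 1
  simp only [one_mul, mul_sub, sum_sub_distrib, sub_eq_zero] at horth
  exact horth.symm

lemma weightedVariance_eq_fiberMean_add (hP : ∀ p, 0 ≤ P p) (f : α → κ) :
    weightedVariance P X = weightedVariance P (fun p => fiberMean P X f (f p))
      + weightedMean P (fun p => (X p - fiberMean P X f (f p)) ^ 2) := by
  set m := weightedMean P X
  have hcross := sum_mul_comp_mul_sub_fiberMean (X := X) hP f fun k => fiberMean P X f k - m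
  unfold weightedVariance
  rw [weightedMean_fiberMean hP f]
  calc ∑ p, P p * (X p - m) ^ 2
      = ∑ p, (P p * (fiberMean P X f (f p) - m) ^ 2 + P p * (X p - fiberMean P X f (f p)) ^ 2)
          + 2 * ∑ p, P p * ((fiberMean P X f (f p) - m) * (X p - fiberMean P X f (f p))) := by
        rw [mul_sum, ← sum_add_distrib]
        exact sum_congr rfl fun p _ => by ring
    _ = _ := by rw [hcross, mul_zero, add_zero, sum_add_distrib]; rfl

theorem rao_blackwell_of_eq_fiberMean (hP : ∀ p, 0 ≤ P p) {f : α → κ} {Y : α → ℝ}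
    (hY : ∀ p, 0 < P p → Y p = fiberMean P X f (f p)) :
    weightedMean P Y = weightedMean P X ∧ weightedVariance P Y ≤ weightedVariance P X := by
  have hmean : weightedMean P Y = weightedMean P X :=
    (weightedMean_congr_of_pos hP hY).trans (weightedMean_fiberMean hP f)
  have hvar : weightedVariance P Y = weightedVariance P (fun p => fiberMean P X f (f p)) := by
    unfold weightedVariance
    rw [hmean, weightedMean_fiberMean hP f]
    exact weightedMean_congr_of_pos hP fun p hp => by rw [hY p hp]
  refine ⟨hmean, ?_⟩
  rw [hvar, weightedVariance_eq_fiberMean_add (X := X) hP f, le_add_iff_nonneg_right]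
  exact sum_nonneg fun p _ => mul_nonneg (hP p) (sq_nonneg _)

end WeightedFiniteSpace

lemma ite_eq_zero_zero_div {G₀ : Type*} [GroupWithZero G₀] (a b : G₀) [Decidable (b = 0)] :
    (if b = 0 then 0 else a / b) = a / b := by
  split_ifs with h
  · rw [h, div_zero]
  · rfl

section KernelJoint

variable {Ω Z A : Type*} [Fintype Ω] [Fintype A] [DecidableEq Z] [DecidableEq A]

lemma sum_filter_prodMap_id_eq {M : Type*} [AddCommMonoid M] (zm : Ω → Z) (z : Z) (a : A)
    (F : Ω × A → M) :
    ∑ q ∈ univ.filter (fun q => Prod.map zm id q = (z, a)), F q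
      = ∑ ω ∈ univ.filter (fun ω => zm ω = z), F (ω, a) := by
  have hfiber : univ.filter (fun q : Ω × A => Prod.map zm id q = (z, a))
      = univ.filter (fun ω => zm ω = z) ×ˢ univ.filter (fun b => b = a) := by
    rw [← filter_product, univ_product_univ]
    simp only [Prod.map, id, Prod.mk.injEq]
  rw [hfiber, sum_product, filter_eq' univ a, if_pos (mem_univ a)]
  simp only [sum_singleton]

lemma fiberMean_prodMap_id_of_kernel {Pj X : Ω × A → ℝ} {P φ : Ω → ℝ} {zm : Ω → Z}
    {K c : Z → A → ℝ}
    (hPj : ∀ p, Pj p = P p.1 * K (zm p.1) p.2) (hX : ∀ p, X p = φ p.1 * c (zm p.1) p.2)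
    {z : Z} {a : A} (hK : K z a ≠ 0) :
    fiberMean Pj X (Prod.map zm id) (z, a)
      = (∑ ω ∈ univ.filter (fun ω => zm ω = z), P ω * φ ω)
          / (∑ ω ∈ univ.filter (fun ω => zm ω = z), P ω) * c z a := by
  unfold fiberMean
  simp only [sum_filter_prodMap_id_eq, hPj, hX]
  have hnum :
      ∑ ω ∈ univ.filter (fun ω => zm ω = z), P ω * K (zm ω) a * (φ ω * c (zm ω) a)
      = K z a * (c z a * ∑ ω ∈ univ.filter (fun ω => zm ω = z), P ω * φ ω) := by
    rw [mul_sum, mul_sum]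
    refine sum_congr rfl fun ω hω => ?_
    rw [(mem_filter.mp hω).2]
    ring
  have hden : ∑ ω ∈ univ.filter (fun ω => zm ω = z), P ω * K (zm ω) a
      = K z a * ∑ ω ∈ univ.filter (fun ω => zm ω = z), P ω := by
    rw [mul_sum]
    exact sum_congr rfl fun ω hω => by rw [(mem_filter.mp hω).2, mul_comm]
  rw [hnum, hden, mul_div_mul_left _ _ hK]
  ring

end KernelJoint

theorem stmt_18_general {Ω Z A : Type*} [Fintype Ω] [Fintype A]
    [DecidableEq Z] [DecidableEq A]
    (Pπ Pβ : Ω → ℝ)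
    (hβ0 : ∀ ω, 0 ≤ Pβ ω)
    (hac : ∀ ω, Pβ ω = 0 → Pπ ω = 0)
    (zm : Ω → Z)
    (β : Z → A → ℝ)
    (hβk0 : ∀ z a, 0 ≤ β z a)
    (Fπ Fβ : Z → ℝ)
    (hFπ : ∀ z, Fπ z = ∑ ω ∈ univ.filter (fun ω => zm ω = z), Pπ ω)
    (hFβ : ∀ z, Fβ z = ∑ ω ∈ univ.filter (fun ω => zm ω = z), Pβ ω)
    (r : Z → A → ℝ)
    -- joint pmf of (history, action) under the behavior policy
    (Pj : Ω × A → ℝ) (hPj : ∀ p, Pj p = Pβ p.1 * β (zm p.1) p.2)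
    (ρhist : Ω → ℝ)
    (hρhist : ∀ ω, ρhist ω = if Pβ ω = 0 then 0 else Pπ ω / Pβ ω)
    (ρact : Z → A → ℝ)
    (w : Z → ℝ)
    (hw : ∀ z, w z = if Fβ z = 0 then 0 else Fπ z / Fβ z)
    (X Y : Ω × A → ℝ)
    (hX : ∀ p, X p = ρhist p.1 * ρact (zm p.1) p.2 * r (zm p.1) p.2)
    (hY : ∀ p, Y p = w (zm p.1) * ρact (zm p.1) p.2 * r (zm p.1) p.2)
    -- expectation and variance under the joint behavior pmf
    (E : (Ω × A → ℝ) → ℝ) (hE : ∀ f, E f = ∑ p, Pj p * f p)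
    (V : (Ω × A → ℝ) → ℝ) (hV : ∀ f, V f = E (fun p => (f p - E f) ^ 2)) :
    (∀ p : Ω × A, 0 < Pj p →
      Y p =
        (∑ p' ∈ univ.filter (fun p' : Ω × A => zm p'.1 = zm p.1 ∧ p'.2 = p.2),
            Pj p' * X p') /
          (∑ p' ∈ univ.filter (fun p' : Ω × A => zm p'.1 = zm p.1 ∧ p'.2 = p.2),
            Pj p')) ∧
    E Y = E X ∧ V Y ≤ V X := by
  have hPj0 : ∀ p, 0 ≤ Pj p := fun p => by rw [hPj]; exact mul_nonneg (hβ0 _) (hβk0 _ _)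
  have hFπ' : ∀ z, Fπ z = ∑ ω ∈ univ.filter (fun ω => zm ω = z), Pβ ω * ρhist ω := by
    intro z
    rw [hFπ]
    refine sum_congr rfl fun ω _ => ?_
    rw [hρhist, ite_eq_zero_zero_div, mul_comm, div_mul_cancel_of_imp (hac ω)]
  have hcond : ∀ p, 0 < Pj p → Y p = fiberMean Pj X (Prod.map zm id) (Prod.map zm id p) := by
    rintro ⟨ω, a⟩ hpos
    have hβa : β (zm ω) a ≠ 0 := fun h => by rw [hPj, h, mul_zero] at hpos; exact hpos.false
    rw [Prod.map_apply, id,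
      fiberMean_prodMap_id_of_kernel (c := fun z a => ρact z a * r z a) hPj
        (fun p => (hX p).trans (mul_assoc _ _ _)) hβa,
      ← hFπ', ← hFβ, hY, hw, ite_eq_zero_zero_div, mul_assoc]
  have hE' : E = weightedMean Pj := funext hE
  have hV' : V = weightedVariance Pj := funext fun f => by rw [hV, hE']; rfl
  obtain ⟨hmean, hvar⟩ := rao_blackwell_of_eq_fiberMean hPj0 hcond
  refine ⟨fun p hp => ?_, hE' ▸ hmean, hV' ▸ hvar⟩
  rw [hcond p hp]
  simp only [fiberMean, Prod.map, id, Prod.mk.injEq]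

/-- per-term Rao–Blackwell property of forward-flow IS. The
forward-flow summand `Y` is the conditional expectation of the per-decision
summand `X` given `(z, a)`; hence they share the same mean and
`Var_β(Y) ≤ Var_β(X)`. -/
theorem stmt_18 {Ω Z A : Type*} [Fintype Ω] [Fintype Z] [Fintype A]
    [DecidableEq Z] [DecidableEq A]
    (Pπ Pβ : Ω → ℝ)
    (hπ0 : ∀ ω, 0 ≤ Pπ ω) (hβ0 : ∀ ω, 0 ≤ Pβ ω)
    (hπ1 : ∑ ω, Pπ ω = 1) (hβ1 : ∑ ω, Pβ ω = 1)
    (hac : ∀ ω, Pβ ω = 0 → Pπ ω = 0)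
    (zm : Ω → Z)
    (π β : Z → A → ℝ)
    (hπk0 : ∀ z a, 0 ≤ π z a) (hβk0 : ∀ z a, 0 ≤ β z a)
    (hπk1 : ∀ z, ∑ a, π z a = 1) (hβk1 : ∀ z, ∑ a, β z a = 1)
    (Fπ Fβ : Z → ℝ)
    (hFπ : ∀ z, Fπ z = ∑ ω ∈ univ.filter (fun ω => zm ω = z), Pπ ω)
    (hFβ : ∀ z, Fβ z = ∑ ω ∈ univ.filter (fun ω => zm ω = z), Pβ ω)
    (hack : ∀ z, 0 < Fπ z → ∀ a, β z a = 0 → π z a = 0)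
    (r : Z → A → ℝ)
    -- joint pmf of (history, action) under the behavior policy
    (Pj : Ω × A → ℝ) (hPj : ∀ p, Pj p = Pβ p.1 * β (zm p.1) p.2)
    (ρhist : Ω → ℝ)
    (hρhist : ∀ ω, ρhist ω = if Pβ ω = 0 then 0 else Pπ ω / Pβ ω)
    (ρact : Z → A → ℝ)
    (hρact : ∀ z a, ρact z a = if β z a = 0 then 0 else π z a / β z a)
    (w : Z → ℝ)
    (hw : ∀ z, w z = if Fβ z = 0 then 0 else Fπ z / Fβ z)
    (X Y : Ω × A → ℝ)
    (hX : ∀ p, X p = ρhist p.1 * ρact (zm p.1) p.2 * r (zm p.1) p.2)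
    (hY : ∀ p, Y p = w (zm p.1) * ρact (zm p.1) p.2 * r (zm p.1) p.2)
    -- expectation and variance under the joint behavior pmf
    (E : (Ω × A → ℝ) → ℝ) (hE : ∀ f, E f = ∑ p, Pj p * f p)
    (V : (Ω × A → ℝ) → ℝ) (hV : ∀ f, V f = E (fun p => (f p - E f) ^ 2)) :
    (∀ p : Ω × A, 0 < Pj p →
      Y p =
        (∑ p' ∈ univ.filter (fun p' : Ω × A => zm p'.1 = zm p.1 ∧ p'.2 = p.2),
            Pj p' * X p') /
          (∑ p' ∈ univ.filter (fun p' : Ω × A => zm p'.1 = zm p.1 ∧ p'.2 = p.2),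
            Pj p')) ∧
    E Y = E X ∧ V Y ≤ V X :=
  stmt_18_general Pπ Pβ hβ0 hac zm β hβk0 Fπ Fβ hFπ hFβ r Pj hPj ρhist hρhist ρact w hw X Y hX hY E
    hE V hV
end
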